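/- Consider the switched positive linear system with discrete and distributed delays ẋ(t) = A⁰_{σ(t)} x(t) + Σ_{i=1}^{m} A^i_{σ(t)} x(t − h^i_{σ(t)}) + ∫_{−h}^{0} B_{σ(t)}(θ) x(t+θ) dθ, t ≥ 0, σ ∈ Σ₊, where for each k = 1,…,N the matrix A⁰_k is Metzler, A^i_k ≥ 0 entrywise, B_k : [−h,0] → ℝ^{n×n} is continuous with B_k(θ) ≥ 0 entrywise, and 0 < h^1_k ≤ … ≤ h^m_k ≤ h. If there exists ξ ∈ ℝⁿ, ξ ≫ 0, such that (A⁰_k + Σ_{i=1}^{m} A^i_k + ∫_{−h}^{0} B_k(s) ds) ξ ≪ 0 for every k = 1,…,N, then the system is exponentially stable under arbitrary switching: there exist M > 0, α > 0 such that every solution with initial function φ ∈ C([−h,0],ℝⁿ) and any σ ∈ Σ₊ satisfies ‖x(t)‖ ≤ M e^{−αt} ‖φ‖ for all t ≥ 0. -/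

import Mathlib

/-!
For `α > 0` small enough the common copositive vector `ξ` still satisfies
`(A⁰_k ξ)_i + e^{αh} ((Σ_l A^l_k + ∫ B_k) ξ)_i < -α ξ_i` in every mode `k`, and then
`c ξ_j e^{-αt}` is a barrier for `|x_j(t)|` whenever `c > 0` and `‖φ‖ ≤ c ξ_j`. At a first
instant where some `±x_i` touches its barrier, the Metzler and nonnegativity assumptions bound its
right derivative through the barrier on the history window `[t - h, t]`, and that bound lies
strictly below the barrier's own derivative, so the barrier is never crossed. Letting
`c ↓ ‖φ‖ / min ξ` gives the estimate with `M = max ξ / min ξ`.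
-/

open MeasureTheory Set Filter Matrix
open scoped ENNReal

noncomputable section

/-- Row-sum matrix norm (the operator norm induced by the `∞`-norm). -/
def matNorm {p q : ℕ} (A : Matrix (Fin p) (Fin q) ℝ) : ℝ :=
  ⨆ i, ∑ j, |A i j|

/-- The Metzler matrix `M(A)` associated with `A`. -/
def metz {n : ℕ} (A : Matrix (Fin n) (Fin n) ℝ) : Matrix (Fin n) (Fin n) ℝ :=
  Matrix.of fun i j => if i = j then A i j else |A i j|

/-- A switching signal: piecewise constant, right continuous, with strictly
positive dwell time (and normalized to be constant on `(-∞, 0]`). -/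
def IsSwitchingSignal {N : ℕ} (σ : ℝ → Fin N) : Prop :=
  (∀ t ≤ (0:ℝ), σ t = σ 0) ∧
  ∃ d : ℝ, 0 < d ∧ ∃ τ : ℕ → ℝ, τ 0 = 0 ∧ (∀ k, τ k + d ≤ τ (k + 1)) ∧
    ∀ k : ℕ, ∀ t ∈ Set.Ico (τ k) (τ (k + 1)), σ t = σ (τ k)

/-- `x` is a solution of the switched system with discrete delays `hd` and distributed
delay kernel `B`:
`ẋ(t) = A⁰_{σ(t)} x(t) + Σ_l A^l_{σ(t)} x(t - h^l_{σ(t)}) + ∫_{-h}^0 B_{σ(t)}(θ) x(t+θ) dθ`,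
with switching signal `σ` and initial function `φ`. -/
def IsSolutionD (h : ℝ) {N n m : ℕ} (σ : ℝ → Fin N)
    (A0 : Fin N → Matrix (Fin n) (Fin n) ℝ)
    (A : Fin N → Fin m → Matrix (Fin n) (Fin n) ℝ)
    (hd : Fin N → Fin m → ℝ)
    (B : Fin N → ℝ → Matrix (Fin n) (Fin n) ℝ)
    (φ : C(Set.Icc (-h) (0:ℝ), Fin n → ℝ)) (x : ℝ → Fin n → ℝ) : Prop :=
  ContinuousOn x (Set.Ici (-h)) ∧
  (∀ θ : Set.Icc (-h) (0:ℝ), x (θ : ℝ) = φ θ) ∧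
  ∀ t : ℝ, 0 ≤ t → (∀ᶠ s in nhds t, σ s = σ t) → ∀ i,
    HasDerivWithinAt (fun s => x s i)
      ((∑ j, A0 (σ t) i j * x t j) + (∑ l, ∑ j, A (σ t) l i j * x (t - hd (σ t) l) j) +
        ∑ j, ∫ θ in (-h)..(0:ℝ), B (σ t) θ i j * x (t + θ) j)
      (Set.Ici t) t

/-- Exponential stability, under arbitrary switching, of the switched system with
discrete and distributed delays. -/
def ExpStableSwD (h : ℝ) {N n m : ℕ}
    (A0 : Fin N → Matrix (Fin n) (Fin n) ℝ)
    (A : Fin N → Fin m → Matrix (Fin n) (Fin n) ℝ)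
    (hd : Fin N → Fin m → ℝ)
    (B : Fin N → ℝ → Matrix (Fin n) (Fin n) ℝ) : Prop :=
  ∃ M > (0:ℝ), ∃ α > (0:ℝ), ∀ σ : ℝ → Fin N, IsSwitchingSignal σ →
    ∀ φ x, IsSolutionD h σ A0 A hd B φ x →
      ∀ t ≥ (0:ℝ), ‖x t‖ ≤ M * Real.exp (-α * t) * ‖φ‖

/-- `x` is a solution of the (non-switched) system with discrete delays `hd` and
distributed delay kernel `B`, with initial function `φ`. -/
def IsSolutionD1 (h : ℝ) {n m : ℕ}
    (A0 : Matrix (Fin n) (Fin n) ℝ)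
    (A : Fin m → Matrix (Fin n) (Fin n) ℝ)
    (hd : Fin m → ℝ)
    (B : ℝ → Matrix (Fin n) (Fin n) ℝ)
    (φ : C(Set.Icc (-h) (0:ℝ), Fin n → ℝ)) (x : ℝ → Fin n → ℝ) : Prop :=
  ContinuousOn x (Set.Ici (-h)) ∧
  (∀ θ : Set.Icc (-h) (0:ℝ), x (θ : ℝ) = φ θ) ∧
  ∀ t : ℝ, 0 ≤ t → ∀ i,
    HasDerivWithinAt (fun s => x s i)
      ((∑ j, A0 i j * x t j) + (∑ l, ∑ j, A l i j * x (t - hd l) j) +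
        ∑ j, ∫ θ in (-h)..(0:ℝ), B θ i j * x (t + θ) j)
      (Set.Ici t) t

/-- Exponential stability of a single (non-switched) system with discrete and
distributed delays. -/
def ExpStableD1 (h : ℝ) {n m : ℕ}
    (A0 : Matrix (Fin n) (Fin n) ℝ)
    (A : Fin m → Matrix (Fin n) (Fin n) ℝ)
    (hd : Fin m → ℝ)
    (B : ℝ → Matrix (Fin n) (Fin n) ℝ) : Prop :=
  ∃ M > (0:ℝ), ∃ α > (0:ℝ), ∀ φ x, IsSolutionD1 h A0 A hd B φ x →
    ∀ t ≥ (0:ℝ), ‖x t‖ ≤ M * Real.exp (-α * t) * ‖φ‖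

open Topology

theorem forall_le_of_eq_imp_eventually_lt {ι : Type*} [Finite ι] {a : ℝ} {y b : ι → ℝ → ℝ}
    (hy : ∀ i, ContinuousOn (y i) (Ici a)) (hb : ∀ i, ContinuousOn (b i) (Ici a))
    (ha : ∀ i, y i a ≤ b i a)
    (hstep : ∀ t, a ≤ t → (∀ u ∈ Icc a t, ∀ i, y i u ≤ b i u) → ∀ i, y i t = b i t →
      ∀ᶠ u in 𝓝[>] t, y i u < b i u) :
    ∀ t, a ≤ t → ∀ i, y i t ≤ b i t := by
  by_contra! hbad
  obtain ⟨t₀, ht₀, i₀, hi₀⟩ := hbad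
  set U := {t | a ≤ t ∧ ∃ i, b i t < y i t}
  have hU : U.Nonempty := ⟨t₀, ht₀, i₀, hi₀⟩
  have hbdd : BddBelow U := ⟨a, fun u hu => hu.1⟩
  set t₁ := sInf U
  have ha₁ : a ≤ t₁ := le_csInf hU fun u hu => hu.1
  have hbefore : ∀ u ∈ Ico a t₁, ∀ i, y i u ≤ b i u := fun u hu i =>
    not_lt.1 fun hlt => (csInf_le hbdd ⟨hu.1, i, hlt⟩).not_gt hu.2
  have hcont : ∀ i, ContinuousWithinAt (fun u => y i u - b i u) (Ici a) t₁ := fun i =>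
    ((hy i).sub (hb i)) t₁ ha₁
  have hhist : ∀ u ∈ Icc a t₁, ∀ i, y i u ≤ b i u := by
    intro u hu i
    rcases hu.2.lt_or_eq with hlt | rfl
    · exact hbefore u ⟨hu.1, hlt⟩ i
    rcases ha₁.eq_or_lt with heq | hlt
    · exact heq ▸ ha i
    have hcl : t₁ ∈ closure (Ico a t₁) := by rw [closure_Ico hlt.ne]; exact ⟨ha₁, le_rfl⟩
    have := ((hcont i).mono Ico_subset_Ici_self).closure_le hcl continuousWithinAt_const
      fun u hu => sub_nonpos.2 (hbefore u hu i)
    exact sub_nonpos.1 this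
  have hafter : ∀ᶠ u in 𝓝[>] t₁, ∀ i, y i u < b i u := by
    refine eventually_all.2 fun i => ?_
    rcases (hhist t₁ ⟨ha₁, le_rfl⟩ i).lt_or_eq with hlt | heq
    · have := ((hcont i).mono (Ioi_subset_Ici ha₁)).eventually_lt continuousWithinAt_const
        (sub_neg.2 hlt)
      filter_upwards [this] with u hu using sub_neg.1 hu
    · exact hstep t₁ ha₁ hhist i heq
  obtain ⟨c, hc, hsub⟩ := mem_nhdsGT_iff_exists_Ioo_subset.1 hafter
  obtain ⟨w, hwU, hwc⟩ := exists_lt_of_csInf_lt hU hc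
  obtain ⟨-, i, hi⟩ := id hwU
  have hw : w ∈ Ioo t₁ c := by
    refine ⟨lt_of_le_of_ne (csInf_le hbdd hwU) fun h => ?_, hwc⟩
    exact (hhist t₁ ⟨ha₁, le_rfl⟩ i).not_gt (h ▸ hi)
  exact (hsub hw i).not_gt hi

theorem eventually_lt_of_hasDerivWithinAt_Ici {f g : ℝ → ℝ} {f' g' t : ℝ}
    (hf : HasDerivWithinAt f f' (Ici t) t) (hg : HasDerivWithinAt g g' (Ici t) t)
    (heq : f t = g t) (hlt : f' < g') : ∀ᶠ u in 𝓝[>] t, f u < g u := by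
  have hslope := hasDerivWithinAt_iff_tendsto_slope.1 (hf.sub hg)
  rw [Ici_sdiff_left] at hslope
  filter_upwards [hslope.eventually_lt_const (sub_neg.2 hlt), self_mem_nhdsWithin] with u hu htu
  rw [slope_def_field, Pi.sub_apply, Pi.sub_apply, heq, sub_self, sub_zero,
    div_lt_iff₀ (sub_pos.2 htu), zero_mul] at hu
  exact sub_neg.1 hu

theorem hasDerivWithinAt_Ici_of_forall_Ioo {f g : ℝ → ℝ} {a b : ℝ} (hab : a < b)
    (hf : ContinuousOn f (Ico a b)) (hg : ContinuousOn g (Ici a))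
    (hderiv : ∀ u ∈ Ioo a b, HasDerivWithinAt f (g u) (Ici u) u) :
    HasDerivWithinAt f (g a) (Ici a) a := by
  set G : ℝ → ℝ := fun u => g (max a u)
  have hG : Continuous G :=
    hg.comp_continuous (continuous_const.max continuous_id) fun u => le_max_left a u
  have hGg : ∀ u, a ≤ u → G u = g u := fun u hu => by simp only [G, max_eq_right hu]
  set P : ℝ → ℝ := fun u => ∫ v in a..u, G v
  have hP : ∀ u, HasDerivAt P (G u) u := fun u => (hG.integral_hasStrictDerivAt a u).hasDerivAt
  have hPc : Continuous P := continuous_iff_continuousAt.2 fun u => (hP u).continuousAt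
  have hconst : ∀ s ∈ Ico a b, f s = f a + P s := by
    intro s hs
    rcases hs.1.eq_or_lt with rfl | has
    · simp [P]
    have hright : EqOn (fun u => f u - P u) (fun _ => f s - P s) (Ioc a s) := fun u hu =>
      (constant_of_has_deriv_right_zero
        ((hf.mono (Icc_subset_Ico hu.1.le hs.2)).sub hPc.continuousOn)
        (fun v hv => by
          simpa [hGg v (hu.1.trans_le hv.1).le] using
            (hderiv v ⟨hu.1.trans_le hv.1, hv.2.trans hs.2⟩).sub (hP v).hasDerivWithinAt)
        s ⟨hu.2, le_rfl⟩).symm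
    have hclosed := hright.of_subset_closure
      ((hf.mono (Icc_subset_Ico_right hs.2)).sub hPc.continuousOn)
      continuousOn_const Ioc_subset_Icc_self (closure_Ioc has.ne).ge
    have := hclosed ⟨le_rfl, has.le⟩
    simp only [P, intervalIntegral.integral_same, sub_zero] at this
    linarith
  have hev : f =ᶠ[𝓝[≥] a] fun u => f a + P u := by
    filter_upwards [Ico_mem_nhdsGE hab] with u hu using hconst u hu
  have hfa : f a = f a + P a := by simp [P]
  simpa [hGg a le_rfl] using
    ((hP a).const_add (f a)).hasDerivWithinAt.congr_of_eventuallyEq hev hfa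

theorem exists_pos_forall_add_exp_mul_lt {ι : Type*} [Finite ι] {p q w : ι → ℝ}
    (hpq : ∀ i, p i + q i < 0) (h : ℝ) :
    ∃ α > 0, ∀ i, p i + Real.exp (α * h) * q i < -α * w i := by
  have hnear : ∀ i, ∀ᶠ α in 𝓝 (0 : ℝ), p i + Real.exp (α * h) * q i + α * w i < 0 := by
    intro i
    have hcont : Continuous fun α : ℝ => p i + Real.exp (α * h) * q i + α * w i := by fun_prop
    exact hcont.continuousAt.eventually_lt continuousAt_const (by simpa using hpq i)
  obtain ⟨α, hα, hαpos⟩ :=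
    (((eventually_all.2 hnear).filter_mono nhdsWithin_le_nhds).and
      (self_mem_nhdsWithin : Ioi (0 : ℝ) ∈ 𝓝[>] 0)).exists
  exact ⟨α, hαpos, fun i => by linarith [hα i]⟩

theorem exists_pos_bounds_of_forall_pos {ι : Type*} [Finite ι] {ξ : ι → ℝ}
    (hξ : ∀ i, 0 < ξ i) : ∃ δ > 0, ∃ Ξ > 0, ∀ i, δ ≤ ξ i ∧ ξ i ≤ Ξ := by
  rcases isEmpty_or_nonempty ι with hι | hι
  · exact ⟨1, one_pos, 1, one_pos, isEmptyElim⟩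
  obtain ⟨i₀, hi₀⟩ := Finite.exists_min ξ
  obtain ⟨i₁, hi₁⟩ := Finite.exists_max ξ
  exact ⟨ξ i₀, hξ i₀, ξ i₁, hξ i₁, fun i => ⟨hi₀ i, hi₁ i⟩⟩

theorem mul_le_abs_of_abs_le_one {s : ℝ} (hs : |s| ≤ 1) (y : ℝ) : s * y ≤ |y| :=
  (le_abs_self _).trans (by rw [abs_mul]; exact mul_le_of_le_one_left (abs_nonneg _) hs)

def delayRhs (h : ℝ) {n m : ℕ} (A0 : Matrix (Fin n) (Fin n) ℝ)
    (A : Fin m → Matrix (Fin n) (Fin n) ℝ) (hd : Fin m → ℝ) (B : ℝ → Matrix (Fin n) (Fin n) ℝ)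
    (x : ℝ → Fin n → ℝ) (t : ℝ) (i : Fin n) : ℝ :=
  (∑ j, A0 i j * x t j) + (∑ l, ∑ j, A l i j * x (t - hd l) j) +
    ∑ j, ∫ θ in (-h)..(0:ℝ), B θ i j * x (t + θ) j

def delayGain (h : ℝ) {n m : ℕ} (A : Fin m → Matrix (Fin n) (Fin n) ℝ)
    (B : ℝ → Matrix (Fin n) (Fin n) ℝ) : Matrix (Fin n) (Fin n) ℝ :=
  ∑ l, A l + Matrix.of fun a b => ∫ s in (-h)..(0:ℝ), B s a b

section DelayRhs

variable {h : ℝ} {n m : ℕ} {A0 : Matrix (Fin n) (Fin n) ℝ} {A : Fin m → Matrix (Fin n) (Fin n) ℝ}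
  {hd : Fin m → ℝ} {B : ℝ → Matrix (Fin n) (Fin n) ℝ} {x : ℝ → Fin n → ℝ}

theorem continuousOn_delayRhs (hh : 0 ≤ h) (hdle : ∀ l, hd l ≤ h)
    (hB : ∀ i j, ContinuousOn (fun θ => B θ i j) (Icc (-h) 0))
    (hx : ContinuousOn x (Ici (-h))) (i : Fin n) :
    ContinuousOn (fun t => delayRhs h A0 A hd B x t i) (Ici 0) := by
  -- extend `x` and `B` continuously to all of `ℝ` by clamping their arguments
  set X : ℝ → Fin n → ℝ := fun u => x (max (-h) u)
  set Bc : ℝ → Matrix (Fin n) (Fin n) ℝ := fun θ => B (projIcc (-h) 0 (by linarith) θ)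
  have hX : ∀ j, Continuous fun u => X u j := fun j => (continuous_apply j).comp
    (hx.comp_continuous (continuous_const.max continuous_id) fun u =>
      mem_Ici.2 (le_max_left _ u))
  have hBc : ∀ a b, Continuous fun θ => Bc θ a b := fun a b =>
    (hB a b).comp_continuous (continuous_subtype_val.comp continuous_projIcc)
      fun θ => (projIcc (-h) 0 _ θ).2
  have hcont : Continuous fun t => delayRhs h A0 A hd Bc X t i := by
    unfold delayRhs
    refine .add (.add (by fun_prop) (by fun_prop)) (continuous_finsetSum _ fun j _ => ?_)
    exact intervalIntegral.continuous_parametric_intervalIntegral_of_continuous'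
      (((hBc i j).comp continuous_snd).mul
        ((hX j).comp (continuous_fst.add continuous_snd))) _ _
  refine hcont.continuousOn.congr fun t (ht : 0 ≤ t) => ?_
  have hXx : ∀ u, -h ≤ u → X u = x u := fun u hu => by simp only [X, max_eq_right hu]
  unfold delayRhs
  congr 1
  · congr 1
    · rw [hXx t (by linarith)]
    · refine Finset.sum_congr rfl fun l _ => ?_
      rw [hXx _ (by linarith [hdle l])]
  · refine Finset.sum_congr rfl fun j _ => intervalIntegral.integral_congr fun θ hθ => ?_
    rw [uIcc_of_le (by linarith)] at hθ
    simp only [Bc, projIcc_of_mem _ hθ, hXx _ (by linarith [hθ.1] : -h ≤ t + θ)]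

theorem delayGain_mulVec (W : Fin n → ℝ) (i : Fin n) :
    (delayGain h A B *ᵥ W) i =
      (∑ l, ∑ j, A l i j * W j) + ∑ j, (∫ θ in (-h)..(0:ℝ), B θ i j) * W j := by
  simp only [delayGain, mulVec, dotProduct, Matrix.add_apply, Matrix.sum_apply, of_apply, add_mul,
    Finset.sum_add_distrib, Finset.sum_mul]
  rw [Finset.sum_comm]

theorem mul_delayRhs_le (hh : 0 ≤ h) (hMetzler : ∀ i j, i ≠ j → 0 ≤ A0 i j)
    (hA : ∀ l i j, 0 ≤ A l i j) (hd0 : ∀ l, 0 ≤ hd l) (hdle : ∀ l, hd l ≤ h)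
    (hB : ∀ i j, ContinuousOn (fun θ => B θ i j) (Icc (-h) 0))
    (hBpos : ∀ θ ∈ Icc (-h) (0:ℝ), ∀ i j, 0 ≤ B θ i j)
    {t s : ℝ} {v W : Fin n → ℝ} {i : Fin n} (hx : ContinuousOn x (Icc (t - h) t))
    (hnow : ∀ j, |x t j| ≤ v j) (hpast : ∀ u ∈ Icc (t - h) t, ∀ j, |x u j| ≤ W j)
    (hs : |s| ≤ 1) (hi : s * x t i = v i) :
    s * delayRhs h A0 A hd B x t i ≤ (A0 *ᵥ v) i + (delayGain h A B *ᵥ W) i := by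
  have hsy := mul_le_abs_of_abs_le_one hs
  have hcur : s * ∑ j, A0 i j * x t j ≤ ∑ j, A0 i j * v j := by
    rw [Finset.mul_sum]
    refine Finset.sum_le_sum fun j _ => ?_
    rcases eq_or_ne i j with rfl | hij
    · rw [← hi]; exact (mul_left_comm _ _ _).le
    · calc s * (A0 i j * x t j) = A0 i j * (s * x t j) := by ring
        _ ≤ A0 i j * v j := mul_le_mul_of_nonneg_left ((hsy _).trans (hnow j)) (hMetzler i j hij)
  have hdisc : s * ∑ l, ∑ j, A l i j * x (t - hd l) j ≤ ∑ l, ∑ j, A l i j * W j := by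
    simp only [Finset.mul_sum]
    refine Finset.sum_le_sum fun l _ => Finset.sum_le_sum fun j _ => ?_
    calc s * (A l i j * x (t - hd l) j) = A l i j * (s * x (t - hd l) j) := by ring
      _ ≤ A l i j * W j := mul_le_mul_of_nonneg_left ((hsy _).trans
          (hpast _ ⟨by linarith [hdle l], by linarith [hd0 l]⟩ j)) (hA l i j)
  have hdist : s * ∑ j, ∫ θ in (-h)..(0:ℝ), B θ i j * x (t + θ) j ≤
      ∑ j, (∫ θ in (-h)..(0:ℝ), B θ i j) * W j := by
    rw [Finset.mul_sum]
    refine Finset.sum_le_sum fun j _ => ?_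
    have hmaps : MapsTo (fun θ => t + θ) (Icc (-h) 0) (Icc (t - h) t) := fun θ hθ =>
      ⟨by linarith [hθ.1], by linarith [hθ.2]⟩
    have hxj : ContinuousOn (fun θ => x (t + θ) j) (Icc (-h) 0) :=
      (continuous_apply j).comp_continuousOn (hx.comp (by fun_prop) hmaps)
    rw [← intervalIntegral.integral_const_mul, ← intervalIntegral.integral_mul_const]
    refine intervalIntegral.integral_mono_on (by linarith)
      ((continuousOn_const.mul ((hB i j).mul hxj)).intervalIntegrable_of_Icc (by linarith))
      (((hB i j).mul continuousOn_const).intervalIntegrable_of_Icc (by linarith)) fun θ hθ => ?_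
    calc s * (B θ i j * x (t + θ) j) = B θ i j * (s * x (t + θ) j) := by ring
      _ ≤ B θ i j * W j := mul_le_mul_of_nonneg_left ((hsy _).trans (hpast _ (hmaps hθ) j))
          (hBpos θ hθ i j)
  rw [delayGain_mulVec]
  simp only [delayRhs, mulVec, dotProduct]
  linarith

end DelayRhs

theorem SignType.abs_coe_le_one (s : SignType) : |(s : ℝ)| ≤ 1 := by
  cases s <;> simp

theorem abs_le_of_forall_signType_mul_le {y b : ℝ} (h : ∀ s : SignType, (s : ℝ) * y ≤ b) :
    |y| ≤ b :=
  abs_le.2 ⟨by linarith [show -y ≤ b by simpa using h (-1)], by simpa using h 1⟩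

theorem IsSwitchingSignal.exists_forall_Ico_eq {N : ℕ} {σ : ℝ → Fin N}
    (hσ : IsSwitchingSignal σ) {t : ℝ} (ht : 0 ≤ t) : ∃ b > t, ∀ u ∈ Ico t b, σ u = σ t := by
  classical
  obtain ⟨-, d, hd, τ, hτ0, hgap, hconst⟩ := hσ
  have hτ : ∀ k : ℕ, k * d ≤ τ k := by
    intro k
    induction k with
    | zero => simp [hτ0]
    | succ k ih => push_cast; linarith [hgap k]
  have hex : ∃ k, t < τ (k + 1) := by
    obtain ⟨k, hk⟩ := exists_nat_gt (t / d)
    refine ⟨k, ?_⟩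
    have := hτ (k + 1)
    push_cast at this
    rw [div_lt_iff₀ hd] at hk
    linarith
  have hK : τ (Nat.find hex) ≤ t := by
    rcases Nat.eq_zero_or_eq_succ_pred (Nat.find hex) with h0 | hsucc
    · rw [h0, hτ0]; exact ht
    · rw [hsucc]
      exact not_lt.1 (Nat.find_min hex (by omega))
  refine ⟨τ (Nat.find hex + 1), Nat.find_spec hex, fun u hu => ?_⟩
  rw [hconst _ u ⟨hK.trans hu.1, hu.2⟩, hconst _ t ⟨hK, Nat.find_spec hex⟩]

section Solutions

variable {N n m : ℕ} {h : ℝ} {σ : ℝ → Fin N} {A0 : Fin N → Matrix (Fin n) (Fin n) ℝ}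
  {A : Fin N → Fin m → Matrix (Fin n) (Fin n) ℝ} {hd : Fin N → Fin m → ℝ}
  {B : Fin N → ℝ → Matrix (Fin n) (Fin n) ℝ} {φ : C(Icc (-h) (0:ℝ), Fin n → ℝ)}
  {x : ℝ → Fin n → ℝ}

theorem IsSolutionD.abs_le_norm (hsol : IsSolutionD h σ A0 A hd B φ x) {u : ℝ}
    (hu : u ∈ Icc (-h) 0) (j : Fin n) : |x u j| ≤ ‖φ‖ := by
  rw [hsol.2.1 ⟨u, hu⟩, ← Real.norm_eq_abs]
  exact (norm_le_pi_norm _ j).trans (φ.norm_coe_le_norm _)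

/-- At a switching instant the equation is not imposed, but the right derivative still follows
the mode that is active from that instant on. -/
theorem IsSolutionD.hasDerivWithinAt_Ici (hsol : IsSolutionD h σ A0 A hd B φ x)
    (hσ : IsSwitchingSignal σ) (hh : 0 ≤ h) (hdle : ∀ k l, hd k l ≤ h)
    (hB : ∀ k i j, ContinuousOn (fun θ => B k θ i j) (Icc (-h) 0)) {t : ℝ} (ht : 0 ≤ t)
    (i : Fin n) :
    HasDerivWithinAt (fun s => x s i)
      (delayRhs h (A0 (σ t)) (A (σ t)) (hd (σ t)) (B (σ t)) x t i) (Ici t) t := by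
  obtain ⟨hx, -, hode⟩ := hsol
  obtain ⟨b, htb, hσb⟩ := hσ.exists_forall_Ico_eq ht
  have hxi : ContinuousOn (fun s => x s i) (Ico t b) :=
    (continuous_apply i).comp_continuousOn hx |>.mono fun u hu => by
      simp only [mem_Ici]; linarith [hu.1]
  refine hasDerivWithinAt_Ici_of_forall_Ioo htb hxi
    ((continuousOn_delayRhs hh (hdle (σ t)) (hB (σ t)) hx i).mono (Ici_subset_Ici.2 ht))
    fun u hu => ?_
  have hσu : ∀ᶠ s in 𝓝 u, σ s = σ u := by
    filter_upwards [Ioo_mem_nhds hu.1 hu.2] with s hs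
    rw [hσb s (Ioo_subset_Ico_self hs), hσb u (Ioo_subset_Ico_self hu)]
  have := hode u (ht.trans hu.1.le) hσu i
  rwa [hσb u (Ioo_subset_Ico_self hu)] at this

end Solutions

structure IsPositiveSwitchedDelaySystem (h : ℝ) {N n m : ℕ}
    (A0 : Fin N → Matrix (Fin n) (Fin n) ℝ) (A : Fin N → Fin m → Matrix (Fin n) (Fin n) ℝ)
    (hd : Fin N → Fin m → ℝ) (B : Fin N → ℝ → Matrix (Fin n) (Fin n) ℝ) : Prop where
  nonneg_h : 0 ≤ h
  metzler : ∀ k i j, i ≠ j → 0 ≤ A0 k i j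
  nonneg_A : ∀ k l i j, 0 ≤ A k l i j
  nonneg_hd : ∀ k l, 0 ≤ hd k l
  hd_le : ∀ k l, hd k l ≤ h
  continuousOn_B : ∀ k i j, ContinuousOn (fun θ => B k θ i j) (Icc (-h) 0)
  nonneg_B : ∀ k, ∀ θ ∈ Icc (-h) (0:ℝ), ∀ i j, 0 ≤ B k θ i j

section Stability

variable {N n m : ℕ} {h : ℝ} {σ : ℝ → Fin N} {A0 : Fin N → Matrix (Fin n) (Fin n) ℝ}
  {A : Fin N → Fin m → Matrix (Fin n) (Fin n) ℝ} {hd : Fin N → Fin m → ℝ}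
  {B : Fin N → ℝ → Matrix (Fin n) (Fin n) ℝ} {φ : C(Icc (-h) (0:ℝ), Fin n → ℝ)}
  {x : ℝ → Fin n → ℝ} {ξ : Fin n → ℝ} {α c : ℝ}

theorem IsSolutionD.eventually_mul_lt_of_eq (hsol : IsSolutionD h σ A0 A hd B φ x)
    (hσ : IsSwitchingSignal σ) (hpos : IsPositiveSwitchedDelaySystem h A0 A hd B)
    (hdecay : ∀ k i,
      (A0 k *ᵥ ξ) i + Real.exp (α * h) * (delayGain h (A k) (B k) *ᵥ ξ) i < -α * ξ i)
    (hξ : ∀ j, 0 ≤ ξ j) (hα : 0 ≤ α) (hc : 0 < c) {t : ℝ} (ht : 0 ≤ t)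
    (hbound : ∀ u ∈ Icc (-h) t, ∀ j, |x u j| ≤ c * ξ j * Real.exp (-α * u))
    {s : ℝ} (hs : |s| ≤ 1) {i : Fin n} (htouch : s * x t i = c * ξ i * Real.exp (-α * t)) :
    ∀ᶠ u in 𝓝[>] t, s * x u i < c * ξ i * Real.exp (-α * u) := by
  set E := Real.exp (-α * t)
  have hpast : ∀ u ∈ Icc (t - h) t, ∀ j, |x u j| ≤ ((c * E * Real.exp (α * h)) • ξ) j := by
    intro u hu j
    refine (hbound u ⟨by linarith [hu.1], hu.2⟩ j).trans ?_
    rw [Pi.smul_apply, smul_eq_mul, mul_assoc c E, ← Real.exp_add, mul_right_comm]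
    have := hξ j
    gcongr
    nlinarith [hu.1]
  have hrhs := mul_delayRhs_le hpos.nonneg_h (hpos.metzler (σ t)) (hpos.nonneg_A (σ t))
    (hpos.nonneg_hd (σ t)) (hpos.hd_le (σ t)) (hpos.continuousOn_B (σ t)) (hpos.nonneg_B (σ t))
    (hsol.1.mono fun u hu => by simp only [mem_Ici]; linarith [hu.1])
    (v := (c * E) • ξ)
    (fun j => (hbound t ⟨by linarith [hpos.nonneg_h], le_rfl⟩ j).trans_eq (by simp [E]; ring))
    hpast hs (by rw [htouch]; simp [E]; ring)
  have hderiv : HasDerivWithinAt (fun u => c * ξ i * Real.exp (-α * u))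
      (c * ξ i * (E * -α)) (Ici t) t :=
    (((hasDerivAt_id t).const_mul (-α)).exp.const_mul _).hasDerivWithinAt.congr_deriv
      (by simp [E])
  have hx' := hsol.hasDerivWithinAt_Ici hσ hpos.nonneg_h hpos.hd_le hpos.continuousOn_B ht i
  refine eventually_lt_of_hasDerivWithinAt_Ici (hx'.const_mul s) hderiv htouch ?_
  have hcE : 0 < c * E := mul_pos hc (Real.exp_pos _)
  calc s * delayRhs h (A0 (σ t)) (A (σ t)) (hd (σ t)) (B (σ t)) x t i
      ≤ (A0 (σ t) *ᵥ (c * E) • ξ) i + (delayGain h (A (σ t)) (B (σ t)) *ᵥ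
          (c * E * Real.exp (α * h)) • ξ) i := hrhs
    _ = c * E * ((A0 (σ t) *ᵥ ξ) i +
          Real.exp (α * h) * (delayGain h (A (σ t)) (B (σ t)) *ᵥ ξ) i) := by
        simp only [mulVec_smul, Pi.smul_apply, smul_eq_mul]; ring
    _ < c * E * (-α * ξ i) := mul_lt_mul_of_pos_left (hdecay (σ t) i) hcE
    _ = c * ξ i * (E * -α) := by ring

theorem IsSolutionD.abs_le_mul_exp (hsol : IsSolutionD h σ A0 A hd B φ x)
    (hσ : IsSwitchingSignal σ) (hpos : IsPositiveSwitchedDelaySystem h A0 A hd B)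
    (hdecay : ∀ k i,
      (A0 k *ᵥ ξ) i + Real.exp (α * h) * (delayGain h (A k) (B k) *ᵥ ξ) i < -α * ξ i)
    (hξ : ∀ j, 0 ≤ ξ j) (hα : 0 ≤ α) (hc : 0 < c) (hφ : ∀ j, ‖φ‖ ≤ c * ξ j) {t : ℝ}
    (ht : 0 ≤ t) (j : Fin n) : |x t j| ≤ c * ξ j * Real.exp (-α * t) := by
  have hinit : ∀ u ∈ Icc (-h) 0, ∀ j, |x u j| ≤ c * ξ j * Real.exp (-α * u) := fun u hu j =>
    (hsol.abs_le_norm hu j).trans <| (hφ j).trans <|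
      le_mul_of_one_le_right (mul_nonneg hc.le (hξ j)) (Real.one_le_exp (by nlinarith [hu.2]))
  -- compare `s * x j` with the barrier for both signs `s` at once
  have hsigned := forall_le_of_eq_imp_eventually_lt (ι := Fin n × SignType) (a := 0)
    (y := fun p u => p.2 * x u p.1) (b := fun p u => c * ξ p.1 * Real.exp (-α * u))
    (fun p => continuousOn_const.mul <| (continuous_apply p.1).comp_continuousOn <|
      hsol.1.mono (Ici_subset_Ici.2 (neg_nonpos.2 hpos.nonneg_h)))
    (fun p => by fun_prop)
    (fun p => (mul_le_abs_of_abs_le_one p.2.abs_coe_le_one _).trans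
      (hinit 0 ⟨neg_nonpos.2 hpos.nonneg_h, le_rfl⟩ p.1))
    (fun t ht hhist p htouch => by
      refine hsol.eventually_mul_lt_of_eq hσ hpos hdecay hξ hα hc ht
        (fun u hu j => ?_) p.2.abs_coe_le_one htouch
      rcases lt_or_ge u 0 with hu0 | hu0
      · exact hinit u ⟨hu.1, hu0.le⟩ j
      · exact abs_le_of_forall_signType_mul_le fun s => hhist u ⟨hu0, hu.2⟩ (j, s))
  exact abs_le_of_forall_signType_mul_le fun s => hsigned t ht (j, s)

theorem IsSolutionD.abs_le (hsol : IsSolutionD h σ A0 A hd B φ x)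
    (hσ : IsSwitchingSignal σ) (hpos : IsPositiveSwitchedDelaySystem h A0 A hd B)
    (hdecay : ∀ k i,
      (A0 k *ᵥ ξ) i + Real.exp (α * h) * (delayGain h (A k) (B k) *ᵥ ξ) i < -α * ξ i)
    (hα : 0 ≤ α) {δ : ℝ} (hδ : 0 < δ) (hδξ : ∀ j, δ ≤ ξ j) {t : ℝ} (ht : 0 ≤ t)
    (j : Fin n) : |x t j| ≤ ‖φ‖ / δ * ξ j * Real.exp (-α * t) := by
  have hlim : Tendsto (fun c => c * ξ j * Real.exp (-α * t)) (𝓝[>] (‖φ‖ / δ))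
      (𝓝 (‖φ‖ / δ * ξ j * Real.exp (-α * t))) :=
    ((continuous_id.mul continuous_const).mul continuous_const).continuousAt.tendsto.mono_left
      nhdsWithin_le_nhds
  refine ge_of_tendsto hlim ?_
  filter_upwards [self_mem_nhdsWithin] with c (hc : ‖φ‖ / δ < c)
  have hc0 : 0 < c := (div_nonneg (norm_nonneg φ) hδ.le).trans_lt hc
  refine hsol.abs_le_mul_exp hσ hpos hdecay
    (fun j => hδ.le.trans (hδξ j)) hα hc0 (fun i => ?_) ht j
  calc ‖φ‖ = ‖φ‖ / δ * δ := (div_mul_cancel₀ _ hδ.ne').symm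
    _ ≤ c * ξ i := mul_le_mul hc.le (hδξ i) hδ.le hc0.le

end Stability

theorem expStableSwD_of_common_LCLF_positive {N n m : ℕ} (h : ℝ) (hh : 0 < h)
    (A0 : Fin N → Matrix (Fin n) (Fin n) ℝ)
    (hMetzler : ∀ k, ∀ i j, i ≠ j → 0 ≤ A0 k i j)
    (A : Fin N → Fin m → Matrix (Fin n) (Fin n) ℝ)
    (hApos : ∀ k l i j, 0 ≤ A k l i j)
    (hd : Fin N → Fin m → ℝ)
    (hdpos : ∀ k l, 0 < hd k l) (hdle : ∀ k l, hd k l ≤ h)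
    (B : Fin N → ℝ → Matrix (Fin n) (Fin n) ℝ)
    (hBcont : ∀ k i j, ContinuousOn (fun θ => B k θ i j) (Set.Icc (-h) 0))
    (hBpos : ∀ k, ∀ θ ∈ Set.Icc (-h) (0:ℝ), ∀ i j, 0 ≤ B k θ i j)
    (ξ : Fin n → ℝ) (hξ : ∀ i, 0 < ξ i)
    (hLCLF : ∀ k, ∀ i,
      ((A0 k + (∑ l, A k l) +
          Matrix.of fun a b => ∫ s in (-h)..(0:ℝ), B k s a b).mulVec ξ) i < 0) :
    ExpStableSwD h A0 A hd B := by
  obtain ⟨α, hα, hdecay⟩ := exists_pos_forall_add_exp_mul_lt (ι := Fin N × Fin n)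
    (p := fun p => (A0 p.1 *ᵥ ξ) p.2) (q := fun p => (delayGain h (A p.1) (B p.1) *ᵥ ξ) p.2)
    (w := fun p => ξ p.2)
    (fun p => by simpa [delayGain, add_mulVec, add_assoc] using hLCLF p.1 p.2) h
  obtain ⟨δ, hδ, Ξ, hΞ, hξb⟩ := exists_pos_bounds_of_forall_pos hξ
  refine ⟨Ξ / δ, div_pos hΞ hδ, α, hα, fun σ hσ φ x hsol t ht => ?_⟩
  refine (pi_norm_le_iff_of_nonneg (by positivity)).2 fun j => ?_
  have hpos : IsPositiveSwitchedDelaySystem h A0 A hd B :=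
    ⟨hh.le, hMetzler, hApos, fun k l => (hdpos k l).le, hdle, hBcont, hBpos⟩
  have hbound := hsol.abs_le hσ hpos (fun k i => hdecay (k, i)) hα.le hδ (fun j => (hξb j).1) ht j
  calc ‖x t j‖ = |x t j| := Real.norm_eq_abs _
    _ ≤ ‖φ‖ / δ * ξ j * Real.exp (-α * t) := hbound
    _ ≤ ‖φ‖ / δ * Ξ * Real.exp (-α * t) := by
        gcongr
        exact (hξb j).2
    _ = Ξ / δ * Real.exp (-α * t) * ‖φ‖ := by ring

end
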